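/- arXiv:1905.01886 — 6 statements merged into one kernel-verified Lean document; each statement's English description precedes it below -/
import Mathlib

section
/- Let μ be a probability measure on ℝ, a ∈ ℝ, and let γ > 0, σ > 0 and x₁ ≥ 0 be constants such that for every x₀ > 0, μ({x : |x − a| ≥ x₀}) ≤ min(1, exp(−x₀^γ/σ + x₁)). Then for every integer k ≥ 1, ∫ |x − a|^k dμ(x) ≤ (2σx₁)^{k/γ} + (k/γ)·(2σ)^{k/γ}·Γ(k/γ), where Γ is the gamma function. -/
/-!
By the layer-cake formula, `∫ |x - a|^p dμ = p ∫₀^∞ t^(p-1) μ(|x - a| ≥ t) dt`. Split at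
`t₀ = (2σx₁)^(1/γ)`: below `t₀` bound the tail by `1`, which contributes `t₀^p`; above `t₀`
we have `x₁ ≤ t^γ/(2σ)`, so the tail is at most `exp(-t^γ/(2σ))`, whose weighted integral is
a Gamma integral.
-/

open MeasureTheory Set Real

theorem lintegral_Ioi_rpow_mul_exp_neg_mul_rpow {p q b : ℝ} (hp : 0 < p) (hq : -1 < q)
    (hb : 0 < b) :
    ∫⁻ t in Ioi 0, ENNReal.ofReal (t ^ q * exp (-b * t ^ p)) =
      ENNReal.ofReal (b ^ (-(q + 1) / p) * (1 / p) * Gamma ((q + 1) / p)) := by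
  rw [← integral_rpow_mul_exp_neg_mul_rpow hp hq hb,
    ofReal_integral_eq_lintegral_ofReal (integrableOn_rpow_mul_exp_neg_mul_rpow hq hp hb)]
  filter_upwards [ae_restrict_mem measurableSet_Ioi] with t ht
  exact mul_nonneg (rpow_nonneg (le_of_lt ht) q) (exp_pos _).le

theorem lintegral_Ioc_rpow_sub_one {p c : ℝ} (hp : 0 < p) (hc : 0 ≤ c) :
    ∫⁻ t in Ioc 0 c, ENNReal.ofReal (t ^ (p - 1)) = ENNReal.ofReal (c ^ p / p) := by
  have hint : IntegrableOn (fun t : ℝ => t ^ (p - 1)) (Ioc 0 c) :=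
    (intervalIntegrable_iff_integrableOn_Ioc_of_le hc).mp
      (intervalIntegral.intervalIntegrable_rpow' (by linarith))
  rw [← ofReal_integral_eq_lintegral_ofReal hint, ← intervalIntegral.integral_of_le hc,
    integral_rpow (Or.inl (by linarith)), sub_add_cancel, zero_rpow hp.ne', sub_zero]
  filter_upwards [ae_restrict_mem measurableSet_Ioc] with t ht
  exact rpow_nonneg ht.1.le _

theorem neg_div_add_le_neg_inv_two_mul {s σ x₁ : ℝ} (hσ : 0 < σ) (hs : 2 * σ * x₁ ≤ s) :
    -s / σ + x₁ ≤ -(2 * σ)⁻¹ * s := by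
  have : x₁ ≤ s / (2 * σ) := (le_div_iff₀ (by positivity)).mpr (by linarith)
  have : -s / σ + x₁ - -(2 * σ)⁻¹ * s = x₁ - s / (2 * σ) := by field_simp; ring
  linarith

section TailBound

variable {Ω : Type*} [MeasurableSpace Ω] {μ : Measure Ω} {f : Ω → ℝ} {γ σ x₁ p : ℝ}

theorem lintegral_meas_le_mul_rpow_le_of_tail_le (hγ : 0 < γ) (hσ : 0 < σ) (hx₁ : 0 ≤ x₁)
    (hp : 0 < p)
    (htail : ∀ t : ℝ, 0 < t → μ {ω | t ≤ f ω} ≤ ENNReal.ofReal (min 1 (exp (-(t ^ γ) / σ + x₁)))) :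
    ∫⁻ t in Ioi 0, μ {ω | t ≤ f ω} * ENNReal.ofReal (t ^ (p - 1)) ≤
      ENNReal.ofReal ((2 * σ * x₁) ^ (p / γ) / p) +
        ENNReal.ofReal ((2 * σ) ^ (p / γ) * (1 / γ) * Gamma (p / γ)) := by
  set t₀ := (2 * σ * x₁) ^ (1 / γ)
  have ht₀ : 0 ≤ t₀ := rpow_nonneg (by positivity) _
  have ht₀_rpow (r : ℝ) : t₀ ^ r = (2 * σ * x₁) ^ (r / γ) := by
    rw [← rpow_mul (by positivity), one_div_mul_eq_div]
  rw [← Ioc_union_Ioi_eq_Ioi ht₀, lintegral_union measurableSet_Ioi (Ioc_disjoint_Ioi le_rfl)]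
  gcongr
  · calc _ ≤ ∫⁻ t in Ioc 0 t₀, ENNReal.ofReal (t ^ (p - 1)) := by
          refine setLIntegral_mono' measurableSet_Ioc fun t ht => ?_
          refine mul_le_of_le_one_left' ((htail t ht.1).trans ?_)
          exact ENNReal.ofReal_le_one.mpr (min_le_left _ _)
      _ = _ := by rw [lintegral_Ioc_rpow_sub_one hp ht₀, ht₀_rpow]
  · calc _ ≤ ∫⁻ t in Ioi t₀, ENNReal.ofReal (t ^ (p - 1) * exp (-(2 * σ)⁻¹ * t ^ γ)) := by
          refine setLIntegral_mono' measurableSet_Ioi fun t ht => ?_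
          have ht0 : 0 < t := ht₀.trans_lt ht
          have hγt : 2 * σ * x₁ ≤ t ^ γ :=
            calc 2 * σ * x₁ = t₀ ^ γ := by rw [ht₀_rpow, div_self hγ.ne', rpow_one]
              _ ≤ t ^ γ := rpow_le_rpow ht₀ ht.le hγ.le
          rw [mul_comm, ENNReal.ofReal_mul (rpow_nonneg ht0.le _)]
          gcongr
          refine (htail t ht0).trans (ENNReal.ofReal_le_ofReal ((min_le_right _ _).trans ?_))
          exact exp_le_exp.mpr (neg_div_add_le_neg_inv_two_mul hσ hγt)
      _ ≤ ∫⁻ t in Ioi 0, ENNReal.ofReal (t ^ (p - 1) * exp (-(2 * σ)⁻¹ * t ^ γ)) :=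
          lintegral_mono_set (Ioi_subset_Ioi ht₀)
      _ = _ := by
          rw [lintegral_Ioi_rpow_mul_exp_neg_mul_rpow hγ (by linarith) (by positivity),
            sub_add_cancel, inv_rpow (by positivity), neg_div, rpow_neg (by positivity), inv_inv]

theorem lintegral_rpow_le_of_tail_le (hf_nn : 0 ≤ᵐ[μ] f) (hf : AEMeasurable f μ)
    (hγ : 0 < γ) (hσ : 0 < σ) (hx₁ : 0 ≤ x₁) (hp : 0 < p)
    (htail : ∀ t : ℝ, 0 < t → μ {ω | t ≤ f ω} ≤ ENNReal.ofReal (min 1 (exp (-(t ^ γ) / σ + x₁)))) :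
    ∫⁻ ω, ENNReal.ofReal (f ω ^ p) ∂μ ≤
      ENNReal.ofReal ((2 * σ * x₁) ^ (p / γ) + p / γ * (2 * σ) ^ (p / γ) * Gamma (p / γ)) := by
  rw [lintegral_rpow_eq_lintegral_meas_le_mul μ hf_nn hf hp]
  calc _ ≤ ENNReal.ofReal p * (ENNReal.ofReal ((2 * σ * x₁) ^ (p / γ) / p) +
        ENNReal.ofReal ((2 * σ) ^ (p / γ) * (1 / γ) * Gamma (p / γ))) := by
        gcongr; exact lintegral_meas_le_mul_rpow_le_of_tail_le hγ hσ hx₁ hp htail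
    _ = _ := by
        have hΓ : 0 ≤ Gamma (p / γ) := (Gamma_pos_of_pos (by positivity)).le
        rw [← ENNReal.ofReal_add (by positivity) (by positivity),
          ← ENNReal.ofReal_mul hp.le, mul_add, mul_div_cancel₀ _ hp.ne']
        ring_nf

end TailBound

/-- Lemma 2 of the supplement: a stretched-exponential tail bound
`μ(|x-a| ≥ x₀) ≤ min(1, exp(-x₀^γ/σ + x₁))` implies explicit bounds on all absolute
moments, `∫ |x-a|^k dμ ≤ (2σx₁)^{k/γ} + (k/γ)(2σ)^{k/γ} Γ(k/γ)`. -/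
theorem moments_from_tail_bound
    (μ : Measure ℝ) [IsProbabilityMeasure μ]
    (a γ σ x₁ : ℝ) (hγ : 0 < γ) (hσ : 0 < σ) (hx₁ : 0 ≤ x₁)
    (htail : ∀ x₀ : ℝ, 0 < x₀ →
      (μ {x | x₀ ≤ |x - a|}).toReal ≤ min 1 (Real.exp (-(x₀ ^ γ) / σ + x₁))) :
    ∀ k : ℕ, 1 ≤ k →
      ∫⁻ x, ENNReal.ofReal (|x - a| ^ k) ∂μ
        ≤ ENNReal.ofReal
            ((2 * σ * x₁) ^ ((k : ℝ) / γ)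
              + ((k : ℝ) / γ) * (2 * σ) ^ ((k : ℝ) / γ) * Real.Gamma ((k : ℝ) / γ)) := by
  intro k hk
  have htail' (t : ℝ) (ht : 0 < t) :
      μ {x | t ≤ |x - a|} ≤ ENNReal.ofReal (min 1 (exp (-(t ^ γ) / σ + x₁))) :=
    (ENNReal.le_ofReal_iff_toReal_le (measure_ne_top μ _)
      (le_min zero_le_one (exp_pos _).le)).mpr (htail t ht)
  simpa only [rpow_natCast] using
    lintegral_rpow_le_of_tail_le (Filter.Eventually.of_forall fun x => abs_nonneg (x - a))
      (measurable_id.sub_const a).abs.aemeasurable hγ hσ hx₁ (Nat.cast_pos.mpr hk) htail'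
end

section
/- Let H be an N×N Hermitian complex matrix, let v ∈ ℂ^N be a unit eigenvector of H with eigenvalue E (Hv = Ev, ‖v‖ = 1), let O be an N×N positive semidefinite complex matrix, and let β ∈ ℝ. Then ⟨v, O v⟩ ≤ e^{βE} · tr(e^{−βH} O), where e^{−βH} is the matrix exponential. -/
open scoped Matrix ComplexOrder

lemma exp_mulVec_eigen {N : ℕ} (A : Matrix (Fin N) (Fin N) ℂ) (v : Fin N → ℂ) (c : ℂ)
    (h : A.mulVec v = c • v) :
    (NormedSpace.exp A).mulVec v = NormedSpace.exp c • v := by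
  letI : SeminormedRing (Matrix (Fin N) (Fin N) ℂ) := Matrix.linftyOpSemiNormedRing
  letI : NormedRing (Matrix (Fin N) (Fin N) ℂ) := Matrix.linftyOpNormedRing
  letI : NormedAlgebra ℂ (Matrix (Fin N) (Fin N) ℂ) := Matrix.linftyOpNormedAlgebra
  have hpow : ∀ n : ℕ, (A ^ n).mulVec v = c ^ n • v := by
    intro n
    induction n with
    | zero => simp [Matrix.one_mulVec]
    | succ n ih =>
        rw [pow_succ', pow_succ', ← Matrix.mulVec_mulVec, ih, Matrix.mulVec_smul, h,
          smul_smul, mul_comm c]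
  let L0 : Matrix (Fin N) (Fin N) ℂ →ₗ[ℂ] (Fin N → ℂ) :=
    { toFun := fun M => M.mulVec v
      map_add' := fun M M' => Matrix.add_mulVec M M' v
      map_smul' := fun a M => Matrix.smul_mulVec a M v }
  let L := LinearMap.toContinuousLinearMap L0
  have hsum : Summable fun n : ℕ => ((Nat.factorial n : ℂ))⁻¹ • A ^ n :=
    NormedSpace.expSeries_summable' (𝕂 := ℂ) A
  have key : (NormedSpace.exp A).mulVec v
      = ∑' n : ℕ, ((Nat.factorial n : ℂ))⁻¹ • (A ^ n).mulVec v := by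
    have := L.map_tsum hsum
    simpa [L, L0, NormedSpace.exp_eq_tsum (𝕂 := ℂ)] using this
  rw [key]
  have : ∀ n : ℕ, ((Nat.factorial n : ℂ))⁻¹ • (A ^ n).mulVec v
      = (((Nat.factorial n : ℂ))⁻¹ • c ^ n) • v := by
    intro n
    rw [hpow, smul_smul, smul_eq_mul]
  rw [tsum_congr this, (NormedSpace.expSeries_summable' (𝕂 := ℂ) c).tsum_smul_const,
    NormedSpace.exp_eq_tsum (𝕂 := ℂ)]

/-- inequality (S.27): the expectation value of a positive semidefinite
matrix `O` in a normalized eigenstate `v` of a Hermitian matrix `H` with eigenvalue `E`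
is at most `e^{βE} · tr(e^{-βH} O)`. -/
theorem eigenstate_expectation_le_exp_trace
    (N : ℕ) (H : Matrix (Fin N) (Fin N) ℂ) (hH : H.IsHermitian)
    (v : Fin N → ℂ) (E : ℝ)
    (hv : H.mulVec v = E • v) (hnorm : (∑ x, Complex.normSq (v x)) = 1)
    (O : Matrix (Fin N) (Fin N) ℂ) (hO : O.PosSemidef) (β : ℝ) :
    (star v ⬝ᵥ O.mulVec v).re
      ≤ Real.exp (β * E) * ((NormedSpace.exp ((-(β : ℂ)) • H) * O).trace).re := by
  obtain ⟨C, rfl⟩ : ∃ C : Matrix (Fin N) (Fin N) ℂ, O = Cᴴ * C := by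
    open scoped MatrixOrder Matrix.Norms.L2Operator in
    exact CStarAlgebra.nonneg_iff_eq_star_mul_self.mp hO.nonneg
  set A2 : Matrix (Fin N) (Fin N) ℂ := (-(β : ℂ)/2) • H with hA2def
  have hA2 : A2.IsHermitian := by
    rw [Matrix.IsHermitian, hA2def, Matrix.conjTranspose_smul, hH.eq]
    congr 1
    simp [Complex.star_def]
  set B : Matrix (Fin N) (Fin N) ℂ := NormedSpace.exp A2 with hBdef
  have hB : Bᴴ = B := (hA2.exp)
  have hvC : H.mulVec v = ((E : ℂ)) • v := by
    rw [hv]; funext x; simp [Complex.real_smul]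
  have hA2v : A2.mulVec v = ((-(β : ℂ)/2) * E) • v := by
    rw [hA2def, Matrix.smul_mulVec, hvC, smul_smul]
  have hBv : B.mulVec v = (NormedSpace.exp ((-(β : ℂ)/2) * E)) • v :=
    exp_mulVec_eigen A2 v _ hA2v
  set μ : ℂ := NormedSpace.exp ((-(β : ℂ)/2) * E) with hμdef
  have hμ : Complex.normSq μ = Real.exp (-(β * E)) := by
    have hz : (-(β : ℂ)/2 * E) = ((-(β * E)/2 : ℝ) : ℂ) := by push_cast; ring
    rw [hμdef, ← Complex.exp_eq_exp_ℂ, ← Complex.sq_norm, Complex.norm_exp, hz,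
      Complex.ofReal_re, sq, ← Real.exp_add]
    ring_nf
  have hsplit : NormedSpace.exp ((-(β : ℂ)) • H) = B * B := by
    have h1 : (-(β : ℂ)) • H = A2 + A2 := by rw [hA2def, ← add_smul, add_halves]
    rw [h1, Matrix.exp_add_of_commute A2 A2 (Commute.refl _)]
  set D : Matrix (Fin N) (Fin N) ℂ := C * B with hDdef
  have htr : (NormedSpace.exp ((-(β : ℂ)) • H) * (Cᴴ * C)).trace = (Dᴴ * D).trace := by
    rw [hsplit, hDdef, Matrix.conjTranspose_mul, hB]
    rw [mul_assoc, Matrix.trace_mul_comm B (B * (Cᴴ * C))]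
    rw [mul_assoc B Cᴴ (C*B), ← mul_assoc Cᴴ C B, mul_assoc B (Cᴴ*C) B]
  have htrRe : ((Dᴴ * D).trace).re = ∑ j, ∑ i, Complex.normSq (D i j) := by
    simp only [Matrix.trace, Matrix.diag, Matrix.mul_apply, Matrix.conjTranspose_apply,
      Complex.re_sum]
    refine Finset.sum_congr rfl fun j _ => Finset.sum_congr rfl fun i _ => ?_
    rw [Complex.star_def, mul_comm, Complex.mul_conj, Complex.ofReal_re]
  have hlhs : (star v ⬝ᵥ (Cᴴ * C).mulVec v).re = ∑ i, Complex.normSq (C.mulVec v i) := by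
    rw [← Matrix.mulVec_mulVec, Matrix.dotProduct_mulVec, ← Matrix.star_mulVec]
    simp only [dotProduct, Pi.star_apply, Complex.star_def, Complex.re_sum]
    refine Finset.sum_congr rfl fun i _ => ?_
    rw [mul_comm, Complex.mul_conj, Complex.ofReal_re]
  have hDv : D.mulVec v = μ • (C.mulVec v) := by
    rw [hDdef, ← Matrix.mulVec_mulVec, hBv, Matrix.mulVec_smul]
  have hCS : ∀ i, Complex.normSq (D.mulVec v i) ≤ ∑ j, Complex.normSq (D i j) := by
    intro i
    have h1 : ‖D.mulVec v i‖ ≤ ∑ j, ‖D i j‖ * ‖v j‖ := by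
      refine (norm_sum_le Finset.univ fun j => D i j * v j).trans ?_
      simp [norm_mul]
    have h2 : (∑ j, ‖D i j‖ * ‖v j‖) ^ 2
        ≤ (∑ j, ‖D i j‖ ^ 2) * (∑ j, ‖v j‖ ^ 2) :=
      Finset.sum_mul_sq_le_sq_mul_sq _ _ _
    have h3 : (∑ j, ‖v j‖ ^ 2) = 1 := by
      simpa only [Complex.sq_norm] using hnorm
    calc Complex.normSq (D.mulVec v i) = ‖D.mulVec v i‖ ^ 2 := (Complex.sq_norm _).symm
      _ ≤ (∑ j, ‖D i j‖ * ‖v j‖) ^ 2 := by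
          apply pow_le_pow_left₀ (norm_nonneg _) h1
      _ ≤ (∑ j, ‖D i j‖ ^ 2) * (∑ j, ‖v j‖ ^ 2) := h2
      _ = ∑ j, Complex.normSq (D i j) := by
          rw [h3, mul_one]; simp only [Complex.sq_norm]
  -- combine
  rw [hlhs, htr, htrRe]
  have key : ∀ i, Complex.normSq (C.mulVec v i)
      = Real.exp (β * E) * Complex.normSq (D.mulVec v i) := by
    intro i
    rw [hDv, Pi.smul_apply, smul_eq_mul, Complex.normSq_mul, hμ, ← mul_assoc, ← Real.exp_add]
    simp
  calc ∑ i, Complex.normSq (C.mulVec v i)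
      = Real.exp (β * E) * ∑ i, Complex.normSq (D.mulVec v i) := by
        rw [Finset.mul_sum]; exact Finset.sum_congr rfl fun i _ => key i
    _ ≤ Real.exp (β * E) * ∑ i, ∑ j, Complex.normSq (D i j) := by
        exact mul_le_mul_of_nonneg_left (Finset.sum_le_sum fun i _ => hCS i)
          (Real.exp_nonneg _)
    _ = Real.exp (β * E) * ∑ j, ∑ i, Complex.normSq (D i j) := by rw [Finset.sum_comm]
end

section
/- Let H be an N×N Hermitian complex matrix with an orthonormal eigenbasis {v_m} and corresponding real eigenvalues {E_m}, let O be an N×N positive semidefinite complex matrix, let β ≥ 0, E ∈ ℝ and Δ > 0. Then Σ_{m : E_m ∈ (E−Δ, E]} ⟨v_m, O v_m⟩ ≤ e^{βE} · tr(e^{−βH} O). Equivalently, if N_{E,Δ} = #{m : E_m ∈ (E−Δ,E]} ≥ 1, the microcanonical average of O over the shell is at most (Z_β e^{βE}/N_{E,Δ}) times the canonical average tr(e^{−βH}O)/Z_β. -/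
open scoped Matrix ComplexOrder

/-!
In an orthonormal eigenbasis of `H`, `tr (e^{-βH} O) = ∑ₘ e^{-β Eₘ} ⟨vₘ, O vₘ⟩`, a sum of
nonnegative terms because `O ⪰ 0`. Dropping the terms outside the shell and using
`e^{βE} e^{-β Eₘ} ≥ 1` for `Eₘ ≤ E` and `β ≥ 0` gives the inequality.
-/

namespace Matrix

variable {n : Type*} [Fintype n] [DecidableEq n]

section Orthonormal

variable {R : Type*} [CommRing R] [StarRing R] {v : n → n → R}

lemma conjTranspose_mul_self_of_orthonormal
    (hv : ∀ m m', star (v m) ⬝ᵥ v m' = if m = m' then 1 else 0) :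
    (of v)ᵀᴴ * (of v)ᵀ = 1 := by
  ext m m'
  simpa [mul_apply, one_apply, dotProduct] using hv m m'

lemma trace_eq_sum_star_dotProduct_mulVec
    (hv : ∀ m m', star (v m) ⬝ᵥ v m' = if m = m' then 1 else 0) (M : Matrix n n R) :
    M.trace = ∑ m, star (v m) ⬝ᵥ M *ᵥ v m := by
  have hU := mul_eq_one_comm.mp (conjTranspose_mul_self_of_orthonormal hv)
  calc M.trace = (M * (of v)ᵀ * (of v)ᵀᴴ).trace := by rw [mul_assoc, hU, mul_one]
    _ = ((of v)ᵀᴴ * (M * (of v)ᵀ)).trace := trace_mul_comm _ _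
    _ = _ := by simp [trace, mul_apply, mulVec, dotProduct]

end Orthonormal

variable {𝕂 : Type*} [RCLike 𝕂]

lemma exp_mulVec_of_mulVec_eq_smul {A : Matrix n n 𝕂} {x : n → 𝕂} {μ : 𝕂}
    (h : A *ᵥ x = μ • x) : NormedSpace.exp A *ᵥ x = NormedSpace.exp μ • x := by
  -- `X` has `x` in every column, so `A X = X (μ • 1)`, and this intertwining passes to `exp`.
  rcases isEmpty_or_nonempty n with _ | ⟨⟨j⟩⟩
  · exact Subsingleton.elim _ _
  let X : Matrix n n 𝕂 := of fun i _ => x i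
  have hX : SemiconjBy X (algebraMap 𝕂 _ μ) A := by
    unfold SemiconjBy
    ext i k
    rw [algebraMap_eq_diagonal, mul_diagonal]
    simpa [X, mul_apply, mulVec, dotProduct, mul_comm] using (congrFun h i).symm
  have hexpX : SemiconjBy X (algebraMap 𝕂 _ (NormedSpace.exp μ)) (NormedSpace.exp A) := by
    open scoped Norms.Operator in
    rw [NormedSpace.algebraMap_exp_comm]
    exact hX.exp_right
  funext i
  have hij := congrFun (congrFun hexpX.eq i) j
  rw [algebraMap_eq_diagonal, mul_diagonal] at hij
  simpa [X, mul_apply, mulVec, dotProduct, mul_comm] using hij.symm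

lemma trace_exp_mul_eq_sum {v : n → n → 𝕂}
    (hv : ∀ m m', star (v m) ⬝ᵥ v m' = if m = m' then 1 else 0)
    {A : Matrix n n 𝕂} {μ : n → 𝕂} (hA : ∀ m, A *ᵥ v m = μ m • v m) (O : Matrix n n 𝕂) :
    (NormedSpace.exp A * O).trace = ∑ m, NormedSpace.exp (μ m) * (star (v m) ⬝ᵥ O *ᵥ v m) := by
  rw [trace_mul_comm, trace_eq_sum_star_dotProduct_mulVec hv]
  refine Finset.sum_congr rfl fun m _ => ?_
  rw [← mulVec_mulVec, exp_mulVec_of_mulVec_eq_smul (hA m), mulVec_smul, dotProduct_smul,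
    smul_eq_mul]

end Matrix

theorem shell_sum_le_exp_trace_general
    (N : ℕ) (H : Matrix (Fin N) (Fin N) ℂ)
    (v : Fin N → Fin N → ℂ) (Em : Fin N → ℝ)
    (honb : ∀ m m', star (v m) ⬝ᵥ v m' = if m = m' then 1 else 0)
    (heig : ∀ m, H.mulVec (v m) = Em m • v m)
    (O : Matrix (Fin N) (Fin N) ℂ) (hO : O.PosSemidef)
    (β E Δ : ℝ) (hβ : 0 ≤ β) :
    ∑ m ∈ Finset.univ.filter (fun m => E - Δ < Em m ∧ Em m ≤ E),
        (star (v m) ⬝ᵥ O.mulVec (v m)).re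
      ≤ Real.exp (β * E) * ((NormedSpace.exp ((-(β : ℂ)) • H) * O).trace).re := by
  set shell := Finset.univ.filter (fun m => E - Δ < Em m ∧ Em m ≤ E)
  set w := fun m => (star (v m) ⬝ᵥ O *ᵥ v m).re
  have hw : ∀ m, 0 ≤ w m := fun m =>
    (Complex.nonneg_iff.mp (hO.dotProduct_mulVec_nonneg (v m))).1
  have hexp : ∀ m, ((-(β : ℂ)) • H) *ᵥ v m = ((-β * Em m : ℝ) : ℂ) • v m := by
    intro m
    rw [Matrix.smul_mulVec, heig, ← Complex.coe_smul, smul_smul, Complex.ofReal_mul,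
      Complex.ofReal_neg]
  have htrace : ((NormedSpace.exp ((-(β : ℂ)) • H) * O).trace).re
      = ∑ m, Real.exp (-β * Em m) * w m := by
    rw [Matrix.trace_exp_mul_eq_sum honb hexp, Complex.re_sum]
    simp only [← Complex.exp_eq_exp_ℂ, ← Complex.ofReal_exp, Complex.re_ofReal_mul, w]
  rw [htrace, Finset.mul_sum]
  calc ∑ m ∈ shell, w m
      ≤ ∑ m ∈ shell, Real.exp (β * E) * (Real.exp (-β * Em m) * w m) := by
        refine Finset.sum_le_sum fun m hm => ?_
        have hmE : β * Em m ≤ β * E :=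
          mul_le_mul_of_nonneg_left (Finset.mem_filter.mp hm).2.2 hβ
        rw [← mul_assoc, ← Real.exp_add]
        exact le_mul_of_one_le_left (hw m) (Real.one_le_exp (by linarith))
    _ ≤ ∑ m, Real.exp (β * E) * (Real.exp (-β * Em m) * w m) :=
        Finset.sum_le_sum_of_subset_of_nonneg (Finset.filter_subset _ _) fun m _ _ =>
          mul_nonneg (Real.exp_pos _).le (mul_nonneg (Real.exp_pos _).le (hw m))

/-- inequality (S.45): for a Hermitian `H` with orthonormal eigenbasis
`{v m}` and eigenvalues `{Em m}`, a positive semidefinite `O`, `β ≥ 0`, `E ∈ ℝ` and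
`Δ > 0`, the sum of eigenstate expectation values of `O` over the energy shell `(E-Δ, E]`
is at most `e^{βE} · tr(e^{-βH} O)`. -/
theorem shell_sum_le_exp_trace
    (N : ℕ) (H : Matrix (Fin N) (Fin N) ℂ) (hH : H.IsHermitian)
    (v : Fin N → Fin N → ℂ) (Em : Fin N → ℝ)
    (honb : ∀ m m', star (v m) ⬝ᵥ v m' = if m = m' then 1 else 0)
    (heig : ∀ m, H.mulVec (v m) = Em m • v m)
    (O : Matrix (Fin N) (Fin N) ℂ) (hO : O.PosSemidef)
    (β E Δ : ℝ) (hβ : 0 ≤ β) (hΔ : 0 < Δ) :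
    ∑ m ∈ Finset.univ.filter (fun m => E - Δ < Em m ∧ Em m ≤ E),
        (star (v m) ⬝ᵥ O.mulVec (v m)).re
      ≤ Real.exp (β * E) * ((NormedSpace.exp ((-(β : ℂ)) • H) * O).trace).re :=
  shell_sum_le_exp_trace_general N H v Em honb heig O hO β E Δ hβ
end

section
/- Let V be a finite set with |V| = n, equipped with a function dist : V × V → ℕ that is symmetric and vanishes exactly on the diagonal, and suppose that for every i ∈ V and every integer s ≥ 1, #{j ∈ V : dist(i,j) ≤ s} ≤ α s^d, where α ≥ 1 and d ≥ 1 is an integer. For a tuple (i₁, …, i_M) ∈ V^M define its isolation radius ℓ(i₁,…,i_M) = max_{1 ≤ q ≤ M} min_{r ≠ q} dist(i_q, i_r). Then for every even integer M ≥ 2 and every integer l̃ ≥ 1, the number of tuples with isolation radius at most l̃ satisfies #{ (i₁,…,i_M) ∈ V^M : ℓ(i₁,…,i_M) ≤ l̃ } ≤ [ 2 M n α l̃^d ]^{M/2}. -/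
open Finset

lemma prod_ite_mem_card {ι β : Type} [Fintype ι] [DecidableEq ι] [CommMonoid β]
    (C : Finset ι) (x y : β) :
    ∏ q : ι, (if q ∈ C then x else y) = x ^ C.card * y ^ (Fintype.card ι - C.card) := by
  classical
  rw [Finset.prod_ite, Finset.prod_const, Finset.prod_const]
  have h1 : (univ.filter fun q : ι => q ∈ C) = C := by ext q; simp
  have h2 := Finset.card_filter_add_card_filter_not
    (s := (univ : Finset ι)) (p := fun q => q ∈ C)
  rw [h1] at h2
  have h3 : (univ.filter fun q : ι => q ∉ C).card = Fintype.card ι - C.card := by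
    have : C.card ≤ Fintype.card ι := Finset.card_le_univ C
    simp only [Finset.card_univ] at h2
    omega
  rw [h1, h3]

lemma exists_small_dom {ι : Type} [Fintype ι] [DecidableEq ι]
    (adj : ι → ι → Prop)
    (hsym : ∀ a b, adj a b → adj b a)
    (hirr : ∀ a, ¬ adj a a)
    (hne : ∀ a, ∃ b, adj a b) :
    ∃ C : Finset ι, 2 * C.card ≤ Fintype.card ι ∧ ∀ q ∉ C, ∃ c ∈ C, adj c q := by
  classical
  have hPuniv : ∀ q ∉ (univ : Finset ι), ∃ c ∈ (univ : Finset ι), adj c q :=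
    fun q hq => absurd (mem_univ q) hq
  obtain ⟨D, hD, hmin⟩ := Finset.exists_minimal
    (s := (univ : Finset (Finset ι)).filter fun D => ∀ q ∉ D, ∃ c ∈ D, adj c q)
    ⟨univ, mem_filter.mpr ⟨mem_univ _, hPuniv⟩⟩
  have hDP : ∀ q ∉ D, ∃ c ∈ D, adj c q := (mem_filter.mp hD).2
  by_cases hcard : 2 * D.card ≤ Fintype.card ι
  · exact ⟨D, hcard, hDP⟩
  · refine ⟨Dᶜ, ?_, ?_⟩
    · have h1 := Finset.card_compl D
      have h2 : D.card ≤ Fintype.card ι := Finset.card_le_univ D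
      omega
    · intro q hq
      have hqD : q ∈ D := by simpa using hq
      have herase : ¬ ∀ u ∉ D.erase q, ∃ c ∈ D.erase q, adj c u := fun hPe =>
        (Finset.erase_ssubset hqD).not_ge (hmin (mem_filter.mpr ⟨mem_univ _, hPe⟩) (Finset.erase_ssubset hqD).le)
      push_neg at herase
      obtain ⟨u, hu, hu2⟩ := herase
      by_cases huq : u = q
      · subst huq
        obtain ⟨b, hb⟩ := hne u
        have hbu : b ≠ u := fun h => hirr u (h ▸ hb)
        have hbD : b ∉ D := fun hbD =>
          hu2 b (Finset.mem_erase.mpr ⟨hbu, hbD⟩) (hsym u b hb)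
        exact ⟨b, by simpa using hbD, hsym u b hb⟩
      · have huD : u ∉ D := fun h => hu (Finset.mem_erase.mpr ⟨huq, h⟩)
        obtain ⟨c, hc, hcu⟩ := hDP u huD
        have hcq : c = q := by
          by_contra h
          exact hu2 c (Finset.mem_erase.mpr ⟨h, hc⟩) hcu
        subst hcq
        exact ⟨u, by simpa using huD, hsym c u hcu⟩

lemma exists_core {ι : Type} [Fintype ι] [DecidableEq ι]
    (adj : ι → ι → Prop)
    (hsym : ∀ a b, adj a b → adj b a)
    (hirr : ∀ a, ¬ adj a a)
    (hne : ∀ a, ∃ b, adj a b)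
    (k : ℕ) (hk : Fintype.card ι = k + k) :
    ∃ (C : Finset ι) (c : ι → ι), C.card = k ∧ (∀ q ∈ C, c q = q) ∧
      ∀ q ∉ C, c q ∈ C ∧ adj (c q) q := by
  classical
  obtain ⟨C₀, hC₀card, hC₀dom⟩ := exists_small_dom adj hsym hirr hne
  have hcu : (univ : Finset ι).card = k + k := by simp [hk]
  obtain ⟨C, hsub, -, hCcard⟩ := Finset.exists_subsuperset_card_eq
    (Finset.subset_univ C₀) (n := k) (by omega) (by omega)
  have hdom : ∀ q ∉ C, ∃ c ∈ C, adj c q := by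
    intro q hq
    obtain ⟨c, hc, hadj⟩ := hC₀dom q (fun h => hq (hsub h))
    exact ⟨c, hsub hc, hadj⟩
  refine ⟨C, fun q => if h : q ∈ C then q else Classical.choose (hdom q h), hCcard,
    fun q hq => dif_pos hq, fun q hq => ?_⟩
  simp only [dif_neg hq]
  obtain ⟨h1, h2⟩ := Classical.choose_spec (hdom q hq)
  exact ⟨h1, h2⟩

set_option maxHeartbeats 1000000 in
/-- counting estimate (S.56). -/
theorem tuple_counting_bound
    (V : Type) [Fintype V] [DecidableEq V]
    (dist : V → V → ℕ)
    (hsymm : ∀ i j, dist i j = dist j i)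
    (hzero : ∀ i j, dist i j = 0 ↔ i = j)
    (α : ℝ) (d : ℕ) (hα : 1 ≤ α) (hd : 1 ≤ d)
    (hgrow : ∀ (i : V) (s : ℕ), 1 ≤ s →
      ((Finset.univ.filter fun j => dist i j ≤ s).card : ℝ) ≤ α * (s : ℝ) ^ d)
    (M : ℕ) (hM : 2 ≤ M) (hMe : Even M) (lt : ℕ) (hl : 1 ≤ lt) :
    (Nat.card {t : Fin M → V //
        (Finset.univ.sup fun q : Fin M =>
          sInf {k | ∃ r, r ≠ q ∧ dist (t q) (t r) = k}) ≤ lt} : ℝ)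
      ≤ (2 * (M : ℝ) * (Fintype.card V : ℝ) * α * (lt : ℝ) ^ d) ^ (M / 2) := by
  classical
  obtain ⟨k, hkM⟩ := hMe
  have hk2 : M / 2 = k := by omega
  have hk1 : 1 ≤ k := by omega
  rw [hk2]
  set P : (Fin M → V) → Prop := fun t =>
    (Finset.univ.sup fun q : Fin M =>
      sInf {k | ∃ r, r ≠ q ∧ dist (t q) (t r) = k}) ≤ lt with hPdef
  rcases isEmpty_or_nonempty V with hV | hV
  · have hFe : IsEmpty (Fin M → V) := ⟨fun t => hV.false (t ⟨0, by omega⟩)⟩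
    have h0 : Nat.card {t : Fin M → V // P t} = 0 := by
      simp [Nat.card_eq_zero]
    rw [h0]
    have hn0 : (Fintype.card V : ℝ) = 0 := by simp [Fintype.card_eq_zero]
    rw [hn0]
    rw [show (2 * (M:ℝ) * 0 * α * (lt:ℝ)^d) = 0 by ring, zero_pow (by omega)]
    simp
  obtain ⟨t₀⟩ := hV
  set n : ℕ := Fintype.card V with hn
  set a : ℝ := α * (lt : ℝ) ^ d with ha
  have ha0 : 0 ≤ a := by positivity
  have hlt1 : (1:ℝ) ≤ (lt:ℝ)^d := one_le_pow₀ (by exact_mod_cast hl)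
  have ha1 : (1:ℝ) ≤ a := by nlinarith [hlt1, hα]
  set S : Finset (Fin M → V) := univ.filter P with hSdef
  have hcardeq : (Nat.card {t : Fin M → V // P t}) = S.card := by
    rw [Nat.card_eq_fintype_card, Fintype.card_subtype]
  -- every index has a close partner
  have hS : ∀ t, P t → ∀ q : Fin M, ∃ r, r ≠ q ∧ dist (t q) (t r) ≤ lt := by
    intro t ht q
    have hne : {k | ∃ r, r ≠ q ∧ dist (t q) (t r) = k}.Nonempty := by
      obtain ⟨r, hr⟩ := Fintype.exists_ne_of_one_lt_card (by simp; omega) q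
      exact ⟨dist (t q) (t r), r, hr, rfl⟩
    obtain ⟨r, hr, hdq⟩ := Nat.sInf_mem hne
    refine ⟨r, hr, ?_⟩
    rw [hdq]
    exact le_trans (Finset.le_sup (f := fun q : Fin M =>
      sInf {k | ∃ r, r ≠ q ∧ dist (t q) (t r) = k}) (mem_univ q)) ht
  -- core decomposition for each admissible tuple
  have key : ∀ t : {t : Fin M → V // P t}, ∃ (C : Finset (Fin M)) (c : Fin M → Fin M),
      C.card = k ∧ (∀ q ∈ C, c q = q) ∧
      ∀ q ∉ C, c q ∈ C ∧ dist (t.1 (c q)) (t.1 q) ≤ lt := by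
    rintro ⟨t, ht⟩
    obtain ⟨C, c, h1, h2, h3⟩ := exists_core
      (fun q r => q ≠ r ∧ dist (t q) (t r) ≤ lt)
      (fun p r hpr => ⟨hpr.1.symm, by rw [hsymm]; exact hpr.2⟩)
      (fun p hp => hp.1 rfl)
      (fun p => by obtain ⟨r, hr, hdp⟩ := hS t ht p; exact ⟨r, hr.symm, hdp⟩)
      k (by simpa using hkM)
    exact ⟨C, c, h1, h2, fun q hq => ⟨(h3 q hq).1, (h3 q hq).2.2⟩⟩
  choose Cf cf hC1 hC2 hC3 using key
  set Φ : (Fin M → V) → Finset (Fin M) × (Fin M → Fin M) × (Fin M → V) :=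
    fun t => if h : P t then
        (Cf ⟨t, h⟩, cf ⟨t, h⟩, fun q => if q ∈ Cf ⟨t, h⟩ then t q else t₀)
      else (∅, id, fun _ => t₀) with hΦdef
  set B : V → Finset V := fun x => univ.filter fun j => dist x j ≤ lt with hBdef
  set W : Finset (Finset (Fin M) × (Fin M → Fin M) × (Fin M → V)) :=
    (Finset.powersetCard k (univ : Finset (Fin M))).biUnion fun C =>
      {C} ×ˢ (Fintype.piFinset fun q => if q ∈ C then ({q} : Finset (Fin M)) else C)
          ×ˢ (Fintype.piFinset fun q => if q ∈ C then (univ : Finset V) else {t₀}) with hWdef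
  have hΦW : ∀ t ∈ S, Φ t ∈ W := by
    intro t htS
    have ht : P t := (mem_filter.mp htS).2
    rw [hWdef]
    simp only [hΦdef, dif_pos ht]
    refine Finset.mem_biUnion.mpr ⟨Cf ⟨t, ht⟩,
      Finset.mem_powersetCard.mpr ⟨subset_univ _, hC1 _⟩, ?_⟩
    rw [Finset.mem_product]
    refine ⟨mem_singleton_self _, ?_⟩
    rw [Finset.mem_product]
    constructor
    · rw [Fintype.mem_piFinset]
      intro q
      by_cases hq : q ∈ Cf ⟨t, ht⟩
      · rw [if_pos hq, mem_singleton]; exact hC2 _ q hq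
      · rw [if_neg hq]; exact (hC3 _ q hq).1
    · rw [Fintype.mem_piFinset]
      intro q
      by_cases hq : q ∈ Cf ⟨t, ht⟩
      · rw [if_pos hq]; exact mem_univ _
      · simp [hq]
  have hsum : S.card = ∑ w ∈ W, (S.filter fun t => Φ t = w).card :=
    Finset.card_eq_sum_card_fiberwise hΦW
  -- fiber bound
  have hfiber : ∀ w ∈ W, ((S.filter fun t => Φ t = w).card : ℝ) ≤ a ^ k := by
    rintro ⟨C, c, v⟩ hw
    rw [hWdef] at hw
    obtain ⟨C', hC', hmemprod⟩ := Finset.mem_biUnion.mp hw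
    rw [Finset.mem_product] at hmemprod
    have hCC' : C = C' := by simpa using hmemprod.1
    subst hCC'
    have hCk : C.card = k := (Finset.mem_powersetCard.mp hC').2
    have hsub : (S.filter fun t => Φ t = (C, c, v)) ⊆
        Fintype.piFinset fun q => if q ∈ C then ({v q} : Finset V) else B (v (c q)) := by
      intro t ht
      rw [mem_filter] at ht
      obtain ⟨htS, htΦ⟩ := ht
      have htP : P t := (mem_filter.mp htS).2
      simp only [hΦdef, dif_pos htP] at htΦ
      rw [Prod.ext_iff] at htΦ
      obtain ⟨hCeq, htΦ2⟩ := htΦ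
      rw [Prod.ext_iff] at htΦ2
      obtain ⟨hceq, hveq⟩ := htΦ2
      simp only at hCeq hceq hveq
      rw [Fintype.mem_piFinset]
      intro q
      by_cases hq : q ∈ C
      · have hqC : q ∈ Cf ⟨t, htP⟩ := by rw [hCeq]; exact hq
        rw [if_pos hq, mem_singleton]
        simp only [← hveq]
        rw [if_pos hqC]
      · have hqC : q ∉ Cf ⟨t, htP⟩ := by rw [hCeq]; exact hq
        obtain ⟨h1, h2⟩ := hC3 ⟨t, htP⟩ q hqC
        rw [hceq] at h1 h2
        rw [hCeq] at h1
        have hv : v (c q) = t (c q) := by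
          simp only [← hveq]
          rw [if_pos (by rw [hCeq]; exact h1)]
        rw [if_neg hq, hBdef]
        rw [mem_filter]
        exact ⟨mem_univ _, by rw [hv]; exact h2⟩
    have hle1 : ((S.filter fun t => Φ t = (C, c, v)).card : ℝ) ≤
        ∏ q : Fin M, ((if q ∈ C then ({v q} : Finset V) else B (v (c q))).card : ℝ) := by
      rw [← Nat.cast_prod, ← Fintype.card_piFinset]
      exact_mod_cast Finset.card_le_card hsub
    refine hle1.trans ?_
    have hle2 : (∏ q : Fin M,
          ((if q ∈ C then ({v q} : Finset V) else B (v (c q))).card : ℝ))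
        ≤ ∏ q : Fin M, (if q ∈ C then (1:ℝ) else a) := by
      apply Finset.prod_le_prod
      · intro q _; positivity
      · intro q _
        by_cases hq : q ∈ C
        · simp [hq]
        · simp only [if_neg hq, hBdef]
          rw [ha]
          exact hgrow _ lt hl
    refine hle2.trans ?_
    rw [prod_ite_mem_card, hCk, one_pow, one_mul]
    have hcompl : Fintype.card (Fin M) - k = k := by simp [hkM]
    rw [hcompl]
  -- total bound
  have htot : (S.card : ℝ) ≤ (W.card : ℝ) * a ^ k := by
    rw [hsum]
    push_cast
    calc ∑ w ∈ W, ((S.filter fun t => Φ t = w).card : ℝ)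
        ≤ ∑ _w ∈ W, a ^ k := Finset.sum_le_sum hfiber
      _ = W.card * a ^ k := by rw [Finset.sum_const, nsmul_eq_mul]
  -- cardinality of W
  have hWcard : W.card = (Nat.choose M k) * (k ^ k * n ^ k) := by
    rw [hWdef]
    rw [Finset.card_biUnion]
    · rw [Finset.sum_congr rfl (g := fun _ => k ^ k * n ^ k) ?_]
      · rw [Finset.sum_const, Finset.card_powersetCard, Finset.card_univ, Fintype.card_fin,
          smul_eq_mul]
      · intro C hC
        have hCk : C.card = k := (Finset.mem_powersetCard.mp hC).2
        rw [Finset.card_product, Finset.card_product, Finset.card_singleton, one_mul,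
          Fintype.card_piFinset, Fintype.card_piFinset]
        have e1 : (∏ q : Fin M, (if q ∈ C then ({q} : Finset (Fin M)) else C).card) = k ^ k := by
          have : ∀ q : Fin M, (if q ∈ C then ({q} : Finset (Fin M)) else C).card
              = if q ∈ C then 1 else k := by
            intro q; by_cases hq : q ∈ C <;> simp [hq, hCk]
          rw [Finset.prod_congr rfl fun q _ => this q, prod_ite_mem_card, hCk, one_pow, one_mul]
          congr 1
          simp [hkM]
        have e2 : (∏ q : Fin M, (if q ∈ C then (univ : Finset V) else ({t₀} : Finset V)).card)
            = n ^ k := by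
          have : ∀ q : Fin M, (if q ∈ C then (univ : Finset V) else ({t₀} : Finset V)).card
              = if q ∈ C then n else 1 := by
            intro q; by_cases hq : q ∈ C <;> simp [hq, hn]
          rw [Finset.prod_congr rfl fun q _ => this q, prod_ite_mem_card, hCk, one_pow, mul_one]
        rw [e1, e2]
    · intro C1 h1 C2 h2 hne
      rw [Function.onFun, Finset.disjoint_left]
      rintro ⟨C, c, v⟩ hm1 hm2
      rw [Finset.mem_product] at hm1 hm2
      have e1 : C = C1 := by simpa using hm1.1
      have e2 : C = C2 := by simpa using hm2.1
      exact hne (e1 ▸ e2)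
  -- final numeric computation
  have hchoose : Nat.choose M k ≤ 4 ^ k := by
    have h1 : Nat.choose M k ≤ 2 ^ M := by
      rw [← Nat.sum_range_choose M]
      exact Finset.single_le_sum (f := fun i => Nat.choose M i)
        (fun i _ => Nat.zero_le _) (Finset.mem_range.mpr (by omega))
    calc Nat.choose M k ≤ 2 ^ M := h1
      _ = 4 ^ k := by rw [hkM, pow_add, ← mul_pow]; norm_num
  have hrhs : (2 * (M : ℝ) * (n : ℝ) * α * (lt : ℝ) ^ d) ^ k
      = 4 ^ k * (k:ℝ) ^ k * (n:ℝ) ^ k * a ^ k := by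
    have hM4 : (2 : ℝ) * (M : ℝ) = 4 * k := by
      rw [hkM]; push_cast; ring
    rw [ha]
    calc (2 * (M : ℝ) * (n : ℝ) * α * (lt : ℝ) ^ d) ^ k
        = ((4 * (k:ℝ)) * (n : ℝ) * (α * (lt:ℝ)^d)) ^ k := by rw [← hM4]; ring_nf
      _ = 4 ^ k * (k:ℝ) ^ k * (n:ℝ) ^ k * (α * (lt:ℝ)^d) ^ k := by
          rw [mul_pow, mul_pow, mul_pow]
  rw [hcardeq, hrhs]
  clear hΦW hsum hfiber hC1 hC2 hC3 hS hgrow hsymm hzero hchoose hrhs hcardeq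
  clear_value W S Φ B n a
  clear hΦdef hWdef hBdef hSdef Φ B Cf cf
  have hchoose : Nat.choose M k ≤ 4 ^ k := by
    have h1 : Nat.choose M k ≤ 2 ^ M := by
      rw [← Nat.sum_range_choose M]
      exact Finset.single_le_sum (f := fun i => Nat.choose M i)
        (fun i _ => Nat.zero_le _) (Finset.mem_range.mpr (by omega))
    calc Nat.choose M k ≤ 2 ^ M := h1
      _ = 4 ^ k := by rw [hkM, pow_add, ← mul_pow]; norm_num
  have h4 : ((Nat.choose M k : ℕ) : ℝ) ≤ (4:ℝ) ^ k := by
    calc ((Nat.choose M k : ℕ) : ℝ) ≤ ((4 ^ k : ℕ) : ℝ) := Nat.cast_le.mpr hchoose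
      _ = (4:ℝ) ^ k := by rw [Nat.cast_pow]; norm_num
  have hW' : (W.card : ℝ) = (Nat.choose M k : ℝ) * ((k:ℝ) ^ k * (n:ℝ) ^ k) := by
    rw [hWcard, Nat.cast_mul, Nat.cast_mul, Nat.cast_pow, Nat.cast_pow]
  have hak : (0:ℝ) ≤ a ^ k := pow_nonneg ha0 k
  have hkn : (0:ℝ) ≤ (k:ℝ) ^ k * (n:ℝ) ^ k :=
    mul_nonneg (pow_nonneg (Nat.cast_nonneg k) k) (pow_nonneg (Nat.cast_nonneg n) k)
  calc (S.card : ℝ) ≤ (W.card : ℝ) * a ^ k := htot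
    _ = ((Nat.choose M k : ℝ) * ((k:ℝ) ^ k * (n:ℝ) ^ k)) * a ^ k := by rw [hW']
    _ ≤ ((4:ℝ) ^ k * ((k:ℝ) ^ k * (n:ℝ) ^ k)) * a ^ k :=
        mul_le_mul_of_nonneg_right (mul_le_mul_of_nonneg_right h4 hkn) hak
    _ = 4 ^ k * (k:ℝ) ^ k * (n:ℝ) ^ k * a ^ k := by ring
end

section
/- Let ξ > 0, a ≥ 0, let d ≥ 1 be an integer and M ≥ 2 an even integer. Then Σ_{l=1}^∞ (a l^d)^{M/2} e^{−l/(3ξ)} ≤ e^{1/(3ξ)} · 3ξ · [ a (3ξ d/2)^d M^d ]^{M/2}. (This is the tail-sum estimate (S.57) of the paper — obtained by comparing the sum with ∫₀^∞ (a x^d)^{M/2} e^{−x/(3ξ)} dx = a^{M/2} (3ξ)^{dM/2+1} (dM/2)! and using (dM/2)! ≤ (dM/2)^{dM/2} — stated with the harmless extra factor e^{1/(3ξ)} from the sum–integral comparison.) -/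
/-!
With `m = M / 2` and `N = d m` the sum is `a^m ∑_{l ≥ 1} l^N e^{-l/(3ξ)}`. Comparing with
`∫₀^∞ x^N e^{-x/(3ξ)} dx = (3ξ)^(N+1) N!` bounds it by `e^{1/(3ξ)} (3ξ)^(N+1) N!`; then
`N! ≤ N^N`, `(3ξ N)^N = ((3ξd/2)^d (2m)^d)^m` and `2m ≤ M` give the claim.
-/

open Real
open scoped Nat

lemma tsum_succ_pow_mul_exp_neg_le {k : ℕ} {c : ℝ} (hc : 0 < c) :
    ∑' i : ℕ, ((i : ℝ) + 1) ^ k * rexp (-(c * ((i : ℝ) + 1))) ≤ rexp c * k ! / c ^ (k + 1) := by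
  refine Real.tsum_le_of_sum_range_le (fun i => by positivity) fun n => ?_
  calc ∑ i ∈ Finset.range n, ((i : ℝ) + 1) ^ k * rexp (-(c * ((i : ℝ) + 1)))
      ≤ ∑ i ∈ Finset.range (n + 1), (i : ℝ) ^ k * rexp (-(c * i)) := by
        rw [Finset.sum_range_succ']
        push_cast
        exact le_add_of_nonneg_right (by positivity)
    _ ≤ rexp c * k ! / c ^ (k + 1) := by
        rw [Finset.range_eq_Ico]; exact sum_Ico_pow_mul_exp_neg_le hc

lemma tsum_succ_pow_mul_exp_neg_div_le_pow (k : ℕ) {s : ℝ} (hs : 0 < s) :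
    ∑' i : ℕ, ((i : ℝ) + 1) ^ k * rexp (-((i : ℝ) + 1) / s)
      ≤ rexp (1 / s) * s * (s * k) ^ k := by
  have hterm (i : ℕ) : rexp (-((i : ℝ) + 1) / s) = rexp (-(s⁻¹ * ((i : ℝ) + 1))) := by
    congr 1; field_simp
  simp_rw [hterm]
  calc _ ≤ rexp s⁻¹ * k ! / s⁻¹ ^ (k + 1) := tsum_succ_pow_mul_exp_neg_le (inv_pos.2 hs)
    _ = rexp (1 / s) * s * (s ^ k * k !) := by rw [one_div, inv_pow, div_inv_eq_mul]; ring
    _ ≤ rexp (1 / s) * s * (s ^ k * (k : ℝ) ^ k) := by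
        gcongr; exact_mod_cast Nat.factorial_le_pow k
    _ = rexp (1 / s) * s * (s * k) ^ k := by ring

theorem tail_sum_estimate_general
    (ξ a : ℝ) (hξ : 0 < ξ) (ha : 0 ≤ a)
    (d M : ℕ) :
    (∑' l : ℕ, (a * ((l : ℝ) + 1) ^ d) ^ (M / 2) *
        Real.exp (-((l : ℝ) + 1) / (3 * ξ)))
      ≤ Real.exp (1 / (3 * ξ)) * (3 * ξ) *
        (a * (3 * ξ * (d : ℝ) / 2) ^ d * (M : ℝ) ^ d) ^ (M / 2) := by
  set m := M / 2
  have hterm (l : ℕ) : (a * ((l : ℝ) + 1) ^ d) ^ m * rexp (-((l : ℝ) + 1) / (3 * ξ))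
      = a ^ m * (((l : ℝ) + 1) ^ (d * m) * rexp (-((l : ℝ) + 1) / (3 * ξ))) := by
    rw [mul_pow, ← pow_mul]; ring
  have h2m : 2 * (m : ℝ) ≤ M := by exact_mod_cast Nat.mul_div_le M 2
  calc _ = a ^ m * ∑' l : ℕ, ((l : ℝ) + 1) ^ (d * m) * rexp (-((l : ℝ) + 1) / (3 * ξ)) := by
        simp_rw [hterm]; exact tsum_mul_left
    _ ≤ a ^ m * (rexp (1 / (3 * ξ)) * (3 * ξ) * (3 * ξ * (d * m : ℕ)) ^ (d * m)) := by
        gcongr; exact tsum_succ_pow_mul_exp_neg_div_le_pow _ (by positivity)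
    _ = rexp (1 / (3 * ξ)) * (3 * ξ) * (a * (3 * ξ * (d * m : ℕ)) ^ d) ^ m := by
        rw [mul_pow a, ← pow_mul]; ring
    _ = rexp (1 / (3 * ξ)) * (3 * ξ) * (a * (3 * ξ * d / 2) ^ d * (2 * m : ℝ) ^ d) ^ m := by
        rw [mul_assoc a, ← mul_pow]; push_cast; ring
    _ ≤ _ := by gcongr

/-- tail-sum estimate (S.57): for `ξ > 0`, `a ≥ 0`, `d ≥ 1` and an
even integer `M ≥ 2`,
`∑_{l=1}^∞ (a l^d)^{M/2} e^{-l/(3ξ)} ≤ e^{1/(3ξ)} · 3ξ · [a (3ξd/2)^d M^d]^{M/2}`. -/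
theorem tail_sum_estimate
    (ξ a : ℝ) (hξ : 0 < ξ) (ha : 0 ≤ a)
    (d M : ℕ) (hd : 1 ≤ d) (hM : 2 ≤ M) (hMe : Even M) :
    (∑' l : ℕ, (a * ((l : ℝ) + 1) ^ d) ^ (M / 2) *
        Real.exp (-((l : ℝ) + 1) / (3 * ξ)))
      ≤ Real.exp (1 / (3 * ξ)) * (3 * ξ) *
        (a * (3 * ξ * (d : ℝ) / 2) ^ d * (M : ℝ) ^ d) ^ (M / 2) :=
  tail_sum_estimate_general ξ a hξ ha d M
end

section
/- Consider the spin system, let ρ be a density matrix satisfying (r,ξ)-clustering, let ℓ ≥ r, M ≥ 2, and let i₁, …, i_M ∈ V with operators Ω_{i₁}, …, Ω_{i_M}, where each Ω_{i_q} is Hermitian with ‖Ω_{i_q}‖ ≤ 1 and is supported on the ball {j : dist(i_q, j) ≤ ℓ}. Set δΩ_{i_q} = Ω_{i_q} − tr(ρ Ω_{i_q})·𝟙. Suppose there is an index q such that l̃ := min_{r' ≠ q} dist(i_q, i_{r'}) satisfies l̃ ≥ 2ℓ + r. Then | tr( ρ · δΩ_{i₁} δΩ_{i₂} ⋯ δΩ_{i_M}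 ) | ≤ 2^M e^{−(l̃ − 2ℓ)/ξ}. -/
open scoped BigOperators Matrix Matrix.Norms.L2Operator ComplexOrder

noncomputable section

namespace ETH

/-- A metric-like structure on the set of sites. -/
structure SpinDist (V : Type) where
  dist : V → V → ℕ
  symm : ∀ i j, dist i j = dist j i
  triangle : ∀ i j k, dist i k ≤ dist i j + dist j k
  eq_zero_iff : ∀ i j, dist i j = 0 ↔ i = j

/-- Spin configurations. -/
abbrev Config (V : Type) := V → Fin 2

/-- Operators on the spin system: `2^n × 2^n` complex matrices. -/
abbrev Op (V : Type) [Fintype V] [DecidableEq V] := Matrix (Config V) (Config V) ℂ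

variable {V : Type} [Fintype V] [DecidableEq V]

/-- Ball of radius `s` around site `i`. -/
def ball (D : SpinDist V) (i : V) (s : ℕ) : Finset V :=
  Finset.univ.filter fun j => D.dist i j ≤ s

/-- `A` is supported on the subset `X` of sites. -/
def SupportedOn (X : Finset V) (A : Op V) : Prop :=
  ∃ B : ({i // i ∈ X} → Fin 2) → ({i // i ∈ X} → Fin 2) → ℂ,
    ∀ f g : Config V,
      A f g = if ∀ i ∉ X, f i = g i then B (fun i => f i.1) (fun i => g i.1) else 0

/-- The distance between two subsets of sites. -/
def setDist (D : SpinDist V) (X Y : Finset V) : ℕ :=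
  sInf {k | ∃ i ∈ X, ∃ j ∈ Y, D.dist i j = k}

/-- Growth condition: balls of radius `s ≥ 1` contain at most `α s^d` sites. -/
def Growth (D : SpinDist V) (α : ℝ) (d : ℕ) : Prop :=
  ∀ (i : V) (s : ℕ), 1 ≤ s →
    ((Finset.univ.filter fun j => D.dist i j ≤ s).card : ℝ) ≤ α * (s : ℝ) ^ d

/-- A density matrix: positive semidefinite with unit trace. -/
def IsDensity (ρ : Op V) : Prop := ρ.PosSemidef ∧ ρ.trace = 1

/-- `(r,ξ)`-clustering of correlations in the state `ρ`. -/
def Clustering (D : SpinDist V) (r : ℕ) (ξ : ℝ) (ρ : Op V) : Prop :=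
  ∀ (X Y : Finset V) (A B : Op V), SupportedOn X A → SupportedOn Y B →
    r ≤ setDist D X Y →
      ‖(ρ * (A * B)).trace - (ρ * A).trace * (ρ * B).trace‖
        ≤ ‖A‖ * ‖B‖ * Real.exp (-(setDist D X Y : ℝ) / ξ)

/-- The (unnormalized) Gibbs operator `e^{-βH}` (matrix exponential). -/
def expm (β : ℝ) (H : Op V) : Op V := NormedSpace.exp ((-(β : ℂ)) • H)

/-- The partition function `Z_β = tr e^{-βH}`. -/
def Zf (β : ℝ) (H : Op V) : ℝ := ((expm β H).trace).re

/-- The canonical (Gibbs) state `ρ_β = e^{-βH}/Z_β`. -/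
def gibbs (β : ℝ) (H : Op V) : Op V := ((expm β H).trace)⁻¹ • expm β H

/-- Canonical expectation value `⟨A⟩_β = tr(ρ_β A)`. -/
def canAvg (β : ℝ) (H A : Op V) : ℝ := ((gibbs β H * A).trace).re

/-- Expectation value `⟨v|A|v⟩` of `A` in the pure state `v`. -/
def eigExp (A : Op V) (v : Config V → ℂ) : ℝ := (star v ⬝ᵥ A.mulVec v).re

/-- The set of (indices of) eigenstates in the energy shell `(E-Δ, E]`. -/
def shell (Em : Config V → ℝ) (E Δ : ℝ) : Finset (Config V) :=
  Finset.univ.filter fun m => E - Δ < Em m ∧ Em m ≤ E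

/-! ### Auxiliary lemmas -/

theorem mem_ball_iff {D : SpinDist V} {c j : V} {s : ℕ} :
    j ∈ ball D c s ↔ D.dist c j ≤ s := by simp [ball]

theorem supportedOn_one (X : Finset V) : SupportedOn X (1 : Op V) := by
  refine ⟨fun a b => if a = b then 1 else 0, fun f g => ?_⟩
  show (1 : Op V) f g = if ∀ i ∉ X, f i = g i then
      (if (fun i : {i // i ∈ X} => f i.1) = (fun i => g i.1) then (1:ℂ) else 0) else 0
  by_cases h1 : ∀ i ∉ X, f i = g i
  · rw [if_pos h1]
    by_cases h2 : (fun i : {i // i ∈ X} => f i.1) = (fun i => g i.1)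
    · rw [if_pos h2]
      have hfg : f = g := funext fun i => by
        by_cases hi : i ∈ X
        · exact congrFun h2 ⟨i, hi⟩
        · exact h1 i hi
      simp [hfg, Matrix.one_apply]
    · rw [if_neg h2]
      have hfg : f ≠ g := fun hc => h2 (by funext i; rw [hc])
      simp [Matrix.one_apply_ne hfg]
  · rw [if_neg h1]
    have hfg : f ≠ g := fun hc => h1 (fun i _ => by rw [hc])
    simp [Matrix.one_apply_ne hfg]

theorem SupportedOn.subSmulOne {X : Finset V} {A : Op V} (hA : SupportedOn X A) (c : ℂ) :
    SupportedOn X (A - c • (1 : Op V)) := by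
  obtain ⟨BA, hBA⟩ := hA
  obtain ⟨B1, hB1⟩ := supportedOn_one (V := V) X
  refine ⟨fun a b => BA a b - c * B1 a b, fun f g => ?_⟩
  have h : (A - c • (1 : Op V)) f g = A f g - c * (1 : Op V) f g := by
    simp [Matrix.sub_apply, smul_eq_mul]
  rw [h, hBA f g, hB1 f g]
  split_ifs <;> ring

theorem SupportedOn.mono {X Y : Finset V} (hXY : X ⊆ Y) {A : Op V} (hA : SupportedOn X A) :
    SupportedOn Y A := by
  obtain ⟨B, hB⟩ := hA
  refine ⟨fun a b => if ∀ i : {i // i ∈ Y}, i.1 ∉ X → a i = b i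
      then B (fun j => a ⟨j.1, hXY j.2⟩) (fun j => b ⟨j.1, hXY j.2⟩) else 0, fun f g => ?_⟩
  show A f g = if ∀ i ∉ Y, f i = g i then
      (if ∀ i : {i // i ∈ Y}, i.1 ∉ X → f i.1 = g i.1
        then B (fun j => f j.1) (fun j => g j.1) else 0) else 0
  rw [hB f g]
  by_cases hY : ∀ i ∉ Y, f i = g i
  · rw [if_pos hY]
    by_cases hX : ∀ i ∉ X, f i = g i
    · rw [if_pos hX, if_pos (fun (i : {i // i ∈ Y}) (hi : i.1 ∉ X) => hX i.1 hi)]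
    · rw [if_neg hX, if_neg]
      intro hc
      exact hX fun i hi => by
        by_cases hiY : i ∈ Y
        · exact hc ⟨i, hiY⟩ hi
        · exact hY i hiY
  · rw [if_neg hY, if_neg]
    intro hX
    exact hY fun i hi => hX i (fun hiX => hi (hXY hiX))

theorem SupportedOn.mul {X : Finset V} {A C : Op V} (hA : SupportedOn X A)
    (hC : SupportedOn X C) : SupportedOn X (A * C) := by
  classical
  obtain ⟨BA, hBA⟩ := hA
  obtain ⟨BC, hBC⟩ := hC
  refine ⟨fun a b => ∑ c : {i // i ∈ X} → Fin 2, BA a c * BC c b, fun f g => ?_⟩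
  rw [Matrix.mul_apply]
  rw [← Equiv.sum_comp (Equiv.piEquivPiSubtypeProd (fun v => v ∈ X) fun _ => Fin 2).symm
        (fun h => A f h * C h g), Fintype.sum_prod_type]
  set fc : {x // ¬ x ∈ X} → Fin 2 := fun i => f i.1 with hfc
  set gc : {x // ¬ x ∈ X} → Fin 2 := fun i => g i.1 with hgc
  have key : ∀ (a : {i // i ∈ X} → Fin 2) (u : {x // ¬ x ∈ X} → Fin 2),
      A f ((Equiv.piEquivPiSubtypeProd (fun v => v ∈ X) fun _ => Fin 2).symm (a, u)) *
      C ((Equiv.piEquivPiSubtypeProd (fun v => v ∈ X) fun _ => Fin 2).symm (a, u)) g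
      = if u = fc ∧ u = gc then BA (fun i => f i.1) a * BC a (fun i => g i.1) else 0 := by
    intro a u
    set h := (Equiv.piEquivPiSubtypeProd (fun v => v ∈ X) fun _ => Fin 2).symm (a, u) with hh
    have hres : (fun i : {i // i ∈ X} => h i.1) = a := by
      funext i
      simp [hh, Equiv.piEquivPiSubtypeProd_symm_apply, i.2]
    have hval : ∀ i (hi : ¬ i ∈ X), h i = u ⟨i, hi⟩ := by
      intro i hi
      simp [hh, Equiv.piEquivPiSubtypeProd_symm_apply, hi]
    have hA' : A f h = if u = fc then BA (fun i => f i.1) a else 0 := by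
      rw [hBA f h, hres]
      congr 1
      simp only [eq_iff_iff]
      constructor
      · intro hc; funext i; rw [← hval i.1 i.2]; exact (hc i.1 i.2).symm
      · intro hc i hi; rw [hval i hi, hc]
    have hC' : C h g = if u = gc then BC a (fun i => g i.1) else 0 := by
      rw [hBC h g, hres]
      congr 1
      simp only [eq_iff_iff]
      constructor
      · intro hc; funext i; rw [← hval i.1 i.2]; exact hc i.1 i.2
      · intro hc i hi; rw [hval i hi, hc]
    rw [hA', hC']
    by_cases h1 : u = fc <;> by_cases h2 : u = gc <;> simp [h1, h2]
  simp only [key]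
  by_cases hfg : ∀ i ∉ X, f i = g i
  · have hce : fc = gc := funext fun i => hfg i.1 i.2
    rw [if_pos hfg]
    have hcol : ∀ a : {i // i ∈ X} → Fin 2,
        (∑ u : {x // ¬ x ∈ X} → Fin 2, if u = fc ∧ u = gc then
          BA (fun i => f i.1) a * BC a (fun i => g i.1) else 0)
        = BA (fun i => f i.1) a * BC a (fun i => g i.1) := by
      intro a
      rw [Finset.sum_eq_single fc]
      · simp [hce]
      · intro u _ hu; rw [if_neg (fun hc => hu hc.1)]
      · intro hu; exact absurd (Finset.mem_univ fc) hu
    simp only [hcol]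
  · rw [if_neg hfg]
    have hce : fc ≠ gc := by
      intro hc
      exact hfg fun i hi => congrFun hc ⟨i, hi⟩
    apply Finset.sum_eq_zero
    intro a _
    apply Finset.sum_eq_zero
    intro u _
    rw [if_neg]
    rintro ⟨h1, h2⟩
    exact hce (h1 ▸ h2)

theorem commute_of_disjoint {X Y : Finset V} {A C : Op V} (hA : SupportedOn X A)
    (hC : SupportedOn Y C) (hXY : ∀ v, v ∈ X → v ∈ Y → False) : A * C = C * A := by
  classical
  obtain ⟨BA, hBA⟩ := hA
  obtain ⟨BC, hBC⟩ := hC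
  ext f g
  rw [Matrix.mul_apply, Matrix.mul_apply]
  set h1 : Config V := fun v => if v ∈ X then g v else f v with hh1
  set h2 : Config V := fun v => if v ∈ Y then g v else f v with hh2
  rw [Finset.sum_eq_single h1 (fun h _ hne => ?_) (fun hm => absurd (Finset.mem_univ h1) hm),
      Finset.sum_eq_single h2 (fun h _ hne => ?_) (fun hm => absurd (Finset.mem_univ h2) hm)]
  · have e1 : A f h1 = BA (fun i => f i.1) (fun i => g i.1) := by
      rw [hBA f h1, if_pos]
      · congr 1
        funext i
        simp only [hh1, if_pos i.2]
      · intro i hi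
        simp only [hh1, if_neg hi]
    have e2 : C f h2 = BC (fun i => f i.1) (fun i => g i.1) := by
      rw [hBC f h2, if_pos]
      · congr 1
        funext i
        simp only [hh2, if_pos i.2]
      · intro i hi
        simp only [hh2, if_neg hi]
    have r1 : (fun i : {i // i ∈ Y} => h1 i.1) = fun i => f i.1 := by
      funext i
      simp only [hh1]
      rw [if_neg (fun hX => hXY i.1 hX i.2)]
    have r2 : (fun i : {i // i ∈ X} => h2 i.1) = fun i => f i.1 := by
      funext i
      simp only [hh2]
      rw [if_neg (fun hY => hXY i.1 i.2 hY)]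
    have e3 : C h1 g = if ∀ i, i ∉ X → i ∉ Y → f i = g i
        then BC (fun i => f i.1) (fun i => g i.1) else 0 := by
      rw [hBC h1 g, ← r1]
      congr 1
      simp only [eq_iff_iff]
      constructor
      · intro hc i hiX hiY
        have := hc i hiY
        simpa only [hh1, if_neg hiX] using this
      · intro hc i hiY
        simp only [hh1]
        by_cases hiX : i ∈ X
        · rw [if_pos hiX]
        · rw [if_neg hiX]; exact hc i hiX hiY
    have e4 : A h2 g = if ∀ i, i ∉ X → i ∉ Y → f i = g i
        then BA (fun i => f i.1) (fun i => g i.1) else 0 := by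
      rw [hBA h2 g, ← r2]
      congr 1
      simp only [eq_iff_iff]
      constructor
      · intro hc i hiX hiY
        have := hc i hiX
        simpa only [hh2, if_neg hiY] using this
      · intro hc i hiX
        simp only [hh2]
        by_cases hiY : i ∈ Y
        · rw [if_pos hiY]
        · rw [if_neg hiY]; exact hc i hiX hiY
    rw [e1, e2, e3, e4]
    by_cases hP : ∀ i, i ∉ X → i ∉ Y → f i = g i
    · rw [if_pos hP, if_pos hP]; ring
    · rw [if_neg hP, if_neg hP]; ring
  · by_cases hCf : ∀ i ∉ Y, f i = h i
    · by_cases hAg : ∀ i ∉ X, h i = g i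
      · exact absurd (funext fun v => by
          by_cases hv : v ∈ Y
          · simp only [hh2, if_pos hv]
            exact hAg v (fun hX => hXY v hX hv)
          · simp only [hh2, if_neg hv]
            exact (hCf v hv).symm) hne
      · rw [hBA h g, if_neg hAg, mul_zero]
    · rw [hBC f h, if_neg hCf, zero_mul]
  · by_cases hAf : ∀ i ∉ X, f i = h i
    · by_cases hCg : ∀ i ∉ Y, h i = g i
      · exact absurd (funext fun v => by
          by_cases hv : v ∈ X
          · simp only [hh1, if_pos hv]
            exact hCg v (fun hY => hXY v hv hY)
          · simp only [hh1, if_neg hv]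
            exact (hAf v hv).symm) hne
      · rw [hBC h g, if_neg hCg, mul_zero]
    · rw [hBA f h, if_neg hAf, zero_mul]

theorem supportedOn_list_prod {Y : Finset V} :
    ∀ l : List (Op V), (∀ A ∈ l, SupportedOn Y A) → SupportedOn Y l.prod
  | [], _ => by simpa using supportedOn_one Y
  | A :: l, h => by
    rw [List.prod_cons]
    exact (h A (by simp)).mul (supportedOn_list_prod l fun B hB => h B (by simp [hB]))

theorem prod_pull {R : Type*} [Monoid R] (a : R) :
    ∀ (l1 l2 : List R), (∀ b ∈ l1, a * b = b * a) →
      (l1 ++ a :: l2).prod = a * (l1 ++ l2).prod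
  | [], l2, _ => by simp
  | b :: l1, l2, h => by
    simp only [List.cons_append, List.prod_cons]
    rw [prod_pull a l1 l2 (fun c hc => h c (by simp [hc])), ← mul_assoc, ← h b (by simp),
      mul_assoc]

theorem op_norm_one : ‖(1 : Op V)‖ = 1 := by
  haveI : Nontrivial (EuclideanSpace ℂ (Config V)) := by
    refine ⟨(WithLp.equiv 2 _).symm (fun _ => 0), (WithLp.equiv 2 _).symm (fun _ => 1), ?_⟩
    intro hc
    have := congrFun (congrArg (WithLp.equiv 2 (Config V → ℂ)) hc) (fun _ => 0)
    simp at this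
  rw [Matrix.cstar_norm_def, map_one]
  exact norm_one

theorem norm_prod_le_pow : ∀ l : List (Op V), (∀ A ∈ l, ‖A‖ ≤ 2) → ‖l.prod‖ ≤ 2 ^ l.length
  | [], _ => by simp [op_norm_one]
  | A :: l, h => by
    rw [List.prod_cons, List.length_cons, pow_succ]
    calc ‖A * l.prod‖ ≤ ‖A‖ * ‖l.prod‖ := norm_mul_le A l.prod
    _ ≤ 2 * 2 ^ l.length := by
        apply mul_le_mul (h A (by simp)) (norm_prod_le_pow l fun B hB => h B (by simp [hB]))
          (norm_nonneg _) (by norm_num)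
    _ = 2 ^ l.length * 2 := by ring

theorem abs_trace_mul_le {ρ : Op V} (hρ : IsDensity ρ) (A : Op V) :
    ‖(ρ * A).trace‖ ≤ ‖A‖ := by
  obtain ⟨hpos, htr⟩ := hρ
  obtain ⟨B, rfl⟩ : ∃ B : Op V, ρ = Bᴴ * B := by
    open scoped MatrixOrder in
    obtain ⟨X, hX, -, hXX⟩ := CFC.exists_sqrt_of_isSelfAdjoint_of_quasispectrumRestricts
      hpos.isHermitian (QuasispectrumRestricts.nnreal_of_nonneg hpos.nonneg)
    exact ⟨X, by rw [← hXX, ← Matrix.star_eq_conjTranspose, hX.star_eq]⟩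
  have hcyc : (Bᴴ * B * A).trace = (B * A * Bᴴ).trace := (Matrix.trace_mul_cycle B A Bᴴ).symm
  rw [hcyc]
  set v : Config V → Config V → ℂ := fun k j => (starRingEnd ℂ) (B k j) with hv
  have hdiag : ∀ k, (B * A * Bᴴ) k k = star (v k) ⬝ᵥ A.mulVec (v k) := by
    intro k
    simp only [Matrix.mul_apply, Matrix.conjTranspose_apply, dotProduct,
      Matrix.mulVec, Pi.star_apply, hv, starRingEnd_apply, star_star]
    simp only [Finset.sum_mul, Finset.mul_sum]
    rw [Finset.sum_comm]
    exact Finset.sum_congr rfl fun p _ => Finset.sum_congr rfl fun q _ => by ring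
  have hbound : ∀ k, ‖(B * A * Bᴴ) k k‖ ≤ ‖A‖ * ∑ j, ‖v k j‖ ^ 2 := by
    intro k
    rw [hdiag k]
    have hinner : (inner ℂ ((WithLp.equiv 2 (Config V → ℂ)).symm (v k))
          ((WithLp.equiv 2 (Config V → ℂ)).symm (A.mulVec (v k))) : ℂ)
        = star (v k) ⬝ᵥ A.mulVec (v k) := by
      rw [PiLp.inner_apply]
      simp only [RCLike.inner_apply, WithLp.equiv_symm_apply, WithLp.ofLp_toLp, dotProduct,
        Pi.star_apply, starRingEnd_apply]
      exact Finset.sum_congr rfl fun x _ => mul_comm _ _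
    rw [← hinner]
    have h1 := norm_inner_le_norm (𝕜 := ℂ) ((WithLp.equiv 2 (Config V → ℂ)).symm (v k))
      ((WithLp.equiv 2 (Config V → ℂ)).symm (A.mulVec (v k)))
    have h2 : ‖(WithLp.equiv 2 (Config V → ℂ)).symm (A.mulVec (v k))‖
        ≤ ‖A‖ * ‖(WithLp.equiv 2 (Config V → ℂ)).symm (v k)‖ :=
      Matrix.l2_opNorm_mulVec A ((WithLp.equiv 2 (Config V → ℂ)).symm (v k))
    have h3 : ‖(WithLp.equiv 2 (Config V → ℂ)).symm (v k)‖ ^ 2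
        = ∑ j, ‖v k j‖ ^ 2 := by
      rw [EuclideanSpace.norm_eq, Real.sq_sqrt (Finset.sum_nonneg fun j _ => sq_nonneg _)]
      simp only [WithLp.equiv_symm_apply, WithLp.ofLp_toLp]
    calc ‖(inner ℂ ((WithLp.equiv 2 (Config V → ℂ)).symm (v k))
          ((WithLp.equiv 2 (Config V → ℂ)).symm (A.mulVec (v k))) : ℂ)‖
        ≤ ‖(WithLp.equiv 2 (Config V → ℂ)).symm (v k)‖ *
          (‖A‖ * ‖(WithLp.equiv 2 (Config V → ℂ)).symm (v k)‖) :=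
          le_trans h1 (mul_le_mul_of_nonneg_left h2 (norm_nonneg _))
      _ = ‖A‖ * ‖(WithLp.equiv 2 (Config V → ℂ)).symm (v k)‖ ^ 2 := by ring
      _ = ‖A‖ * ∑ j, ‖v k j‖ ^ 2 := by rw [h3]
  have hsum : ∑ k, ∑ j, ‖v k j‖ ^ 2 = 1 := by
    have htr' : (Bᴴ * B).trace = 1 := htr
    rw [Matrix.trace] at htr'
    have hre := congrArg Complex.re htr'
    simp only [Matrix.diag_apply, Matrix.mul_apply, Matrix.conjTranspose_apply,
      Complex.re_sum, Complex.one_re] at hre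
    rw [Finset.sum_comm] at hre
    rw [← hre]
    refine Finset.sum_congr rfl fun k _ => ?_
    refine Finset.sum_congr rfl fun j _ => ?_
    have hz : ‖v k j‖ ^ 2 = ‖B k j‖ ^ 2 := by
      rw [hv]; simp only [Complex.norm_conj]
    rw [hz, show (star (B k j) * B k j) = B k j * (starRingEnd ℂ) (B k j) from by
      rw [starRingEnd_apply]; ring, Complex.mul_conj, Complex.ofReal_re, Complex.sq_norm]
  calc ‖(B * A * Bᴴ).trace‖ ≤ ∑ k, ‖(B * A * Bᴴ) k k‖ :=
        norm_sum_le _ _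
    _ ≤ ∑ k, ‖A‖ * ∑ j, ‖v k j‖ ^ 2 := Finset.sum_le_sum fun k _ => hbound k
    _ = ‖A‖ * ∑ k, ∑ j, ‖v k j‖ ^ 2 := by rw [Finset.mul_sum]
    _ = ‖A‖ := by rw [hsum, mul_one]

/-- inequality (S.42): if one of the sites `i q` in a tuple is at
distance `lt = min_{r' ≠ q} dist(i q, i r') ≥ 2ℓ + r` from all others, then the expectation
of the ordered product of the centered local operators is exponentially small:
`|tr(ρ δΩ_{i₁} ⋯ δΩ_{i_M})| ≤ 2^M e^{-(lt - 2ℓ)/ξ}`. -/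
theorem clustered_product_trace_bound
    (V : Type) [Fintype V] [DecidableEq V]
    (D : SpinDist V) (r ℓ : ℕ) (hr : 1 ≤ r) (hrl : r ≤ ℓ)
    (ξ : ℝ) (hξ : 0 < ξ)
    (ρ : Op V) (hρ : IsDensity ρ) (hcl : Clustering D r ξ ρ)
    (M : ℕ) (hM : 2 ≤ M)
    (i : Fin M → V) (Ω : Fin M → Op V)
    (hherm : ∀ q, (Ω q).IsHermitian)
    (hnorm : ∀ q, ‖Ω q‖ ≤ 1)
    (hsupp : ∀ q, SupportedOn (ball D (i q) ℓ) (Ω q))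
    (q : Fin M) (lt : ℕ)
    (hlt : lt = sInf {k | ∃ r' : Fin M, r' ≠ q ∧ D.dist (i q) (i r') = k})
    (hfar : 2 * ℓ + r ≤ lt) :
    ‖((ρ * (List.ofFn fun q' : Fin M =>
            Ω q' - ((ρ * Ω q').trace) • (1 : Op V)).prod).trace)‖
      ≤ 2 ^ M * Real.exp (-((lt : ℝ) - 2 * (ℓ : ℝ)) / ξ) := by

  classical
  set δ : Fin M → Op V := fun q' : Fin M =>
      Ω q' - ((ρ * Ω q').trace) • (1 : Op V) with hδ
  set L : List (Op V) := List.ofFn δ with hL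
  have hlen : L.length = M := by simp [hL]
  have hqM : (q : ℕ) < M := q.2
  -- decomposition of the list
  set l1 : List (Op V) := L.take q.1 with hl1
  set l2 : List (Op V) := L.drop (q.1 + 1) with hl2
  have hdec : L = l1 ++ δ q :: l2 := by
    conv_lhs => rw [← List.take_append_drop q.1 L]
    rw [hl1, hl2]
    congr 1
    rw [List.drop_eq_getElem_cons (by rw [hlen]; exact hqM)]
    congr 1
    simp only [hL, List.getElem_ofFn, Fin.eta]
  -- elements of l1 ++ l2
  have hmem : ∀ b ∈ l1 ++ l2, ∃ r' : Fin M, r' ≠ q ∧ b = δ r' := by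
    intro b hb
    rcases List.mem_append.mp hb with h | h
    · obtain ⟨n, hn, hget⟩ := List.mem_iff_getElem.mp h
      have hn' : n < q.1 := by
        rw [hl1, List.length_take, hlen] at hn; omega
      have hnM : n < M := by omega
      refine ⟨⟨n, hnM⟩, Fin.ne_of_val_ne (show n ≠ q.1 by omega), ?_⟩
      rw [← hget]
      simp only [hl1, List.getElem_take, hL, List.getElem_ofFn]
    · obtain ⟨n, hn, hget⟩ := List.mem_iff_getElem.mp h
      have hn' : n < M - (q.1 + 1) := by
        rw [hl2, List.length_drop, hlen] at hn; omega
      have hnM : q.1 + 1 + n < M := by omega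
      refine ⟨⟨q.1 + 1 + n, hnM⟩, Fin.ne_of_val_ne (show q.1 + 1 + n ≠ q.1 by omega), ?_⟩
      rw [← hget]
      simp only [hl2, List.getElem_drop, hL, List.getElem_ofFn]
  -- supports
  set X : Finset V := ball D (i q) ℓ with hXdef
  set Y : Finset V := (Finset.univ.erase q).biUnion (fun r' => ball D (i r') ℓ) with hYdef
  have hsuppδ : ∀ r', SupportedOn (ball D (i r') ℓ) (δ r') := fun r' =>
    (hsupp r').subSmulOne _
  have hself : ∀ r', i r' ∈ ball D (i r') ℓ := fun r' =>
    mem_ball_iff.mpr (by rw [(D.eq_zero_iff (i r') (i r')).mpr rfl]; omega)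
  have hballY : ∀ r' : Fin M, r' ≠ q → ball D (i r') ℓ ⊆ Y := by
    intro r' hr' j hj
    rw [hYdef]
    exact Finset.mem_biUnion.mpr ⟨r', Finset.mem_erase.mpr ⟨hr', Finset.mem_univ _⟩, hj⟩
  have hsuppX : SupportedOn X (δ q) := hsuppδ q
  have hsuppY : SupportedOn Y (l1 ++ l2).prod := by
    apply supportedOn_list_prod
    intro b hb
    obtain ⟨r', hr', rfl⟩ := hmem b hb
    exact (hsuppδ r').mono (hballY r' hr')
  -- lt is a lower bound on distances from i q to other centers
  have hltle : ∀ r' : Fin M, r' ≠ q → lt ≤ D.dist (i q) (i r') := by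
    intro r' hr'
    rw [hlt]
    exact Nat.sInf_le ⟨r', hr', rfl⟩
  -- disjointness of supports
  have hdisj : ∀ v, v ∈ X → v ∈ Y → False := by
    intro v hvX hvY
    rw [hYdef] at hvY
    obtain ⟨r', hr'm, hvb⟩ := Finset.mem_biUnion.mp hvY
    have hr' : r' ≠ q := (Finset.mem_erase.mp hr'm).1
    have h1 : D.dist (i q) v ≤ ℓ := mem_ball_iff.mp hvX
    have h2 : D.dist (i r') v ≤ ℓ := mem_ball_iff.mp hvb
    have h3 : D.dist (i q) (i r') ≤ D.dist (i q) v + D.dist v (i r') := D.triangle _ _ _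
    have h4 : D.dist v (i r') = D.dist (i r') v := D.symm _ _
    have h5 := hltle r' hr'
    omega
  -- commutation
  have hcomm : ∀ b ∈ l1, δ q * b = b * δ q := by
    intro b hb
    obtain ⟨r', hr', rfl⟩ := hmem b (List.mem_append_left _ hb)
    exact commute_of_disjoint hsuppX ((hsuppδ r').mono (hballY r' hr'))
      (fun v hv1 hv2 => hdisj v hv1 hv2)
  have hLprod : L.prod = δ q * (l1 ++ l2).prod := by
    conv_lhs => rw [hdec]
    exact prod_pull _ _ _ hcomm
  -- setDist bound
  haveI : Nontrivial (Fin M) := Fin.nontrivial_iff_two_le.mpr hM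
  obtain ⟨r0, hr0q⟩ := exists_ne q
  have hsd : lt - 2 * ℓ ≤ setDist D X Y := by
    unfold setDist
    apply le_csInf
    · exact ⟨D.dist (i q) (i r0), i q, hself q, i r0, hballY r0 hr0q (hself r0), rfl⟩
    · rintro k ⟨a, ha, b, hb, rfl⟩
      rw [hYdef] at hb
      obtain ⟨r', hr'm, hbb⟩ := Finset.mem_biUnion.mp hb
      have hr' : r' ≠ q := (Finset.mem_erase.mp hr'm).1
      have h1 : D.dist (i q) a ≤ ℓ := mem_ball_iff.mp ha
      have h2 : D.dist (i r') b ≤ ℓ := mem_ball_iff.mp hbb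
      have h3 : D.dist (i q) (i r') ≤ D.dist (i q) a + D.dist a (i r') := D.triangle _ _ _
      have h4 : D.dist a (i r') ≤ D.dist a b + D.dist b (i r') := D.triangle _ _ _
      have h5 : D.dist b (i r') = D.dist (i r') b := D.symm _ _
      have h6 := hltle r' hr'
      omega
  have hrsd : r ≤ setDist D X Y := le_trans (by omega) hsd
  -- clustering
  have hclu := hcl X Y (δ q) ((l1 ++ l2).prod) hsuppX hsuppY hrsd
  have htr0 : (ρ * δ q).trace = 0 := by
    rw [hδ]
    simp only [mul_sub, Matrix.trace_sub, Matrix.mul_smul, Matrix.mul_one, Matrix.trace_smul,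
      smul_eq_mul, hρ.2, mul_one, sub_self]
  rw [htr0, zero_mul, sub_zero] at hclu
  -- norm bounds
  have hδnorm : ∀ r' : Fin M, ‖δ r'‖ ≤ 2 := by
    intro r'
    rw [hδ]
    calc ‖Ω r' - ((ρ * Ω r').trace) • (1 : Op V)‖
        ≤ ‖Ω r'‖ + ‖((ρ * Ω r').trace) • (1 : Op V)‖ := norm_sub_le _ _
      _ = ‖Ω r'‖ + ‖(ρ * Ω r').trace‖ := by
          rw [norm_smul, op_norm_one, mul_one]
      _ ≤ 1 + 1 := add_le_add (hnorm r')
          (le_trans (abs_trace_mul_le hρ (Ω r')) (hnorm r'))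
      _ = 2 := by norm_num
  have hQlen : (l1 ++ l2).length = M - 1 := by
    rw [List.length_append, hl1, hl2, List.length_take, List.length_drop, hlen]
    omega
  have hQnorm : ‖(l1 ++ l2).prod‖ ≤ 2 ^ (M - 1) := by
    rw [← hQlen]
    apply norm_prod_le_pow
    intro b hb
    obtain ⟨r', _, rfl⟩ := hmem b hb
    exact hδnorm r'
  -- exponential bound
  have h2l : 2 * ℓ ≤ lt := by omega
  have hcast : ((lt : ℝ) - 2 * (ℓ : ℝ)) ≤ (setDist D X Y : ℝ) := by
    have h := (Nat.cast_le (α := ℝ)).mpr hsd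
    rw [Nat.cast_sub h2l] at h
    push_cast at h
    linarith
  have hexp : Real.exp (-(setDist D X Y : ℝ) / ξ) ≤
      Real.exp (-((lt : ℝ) - 2 * (ℓ : ℝ)) / ξ) := by
    apply Real.exp_le_exp.mpr
    have hneg : -(setDist D X Y : ℝ) ≤ -((lt : ℝ) - 2 * (ℓ : ℝ)) := by linarith
    exact (div_le_div_iff_of_pos_right hξ).mpr hneg
  calc ‖(ρ * L.prod).trace‖
      = ‖(ρ * (δ q * (l1 ++ l2).prod)).trace‖ := by rw [hLprod]
    _ ≤ ‖δ q‖ * ‖(l1 ++ l2).prod‖ * Real.exp (-(setDist D X Y : ℝ) / ξ) := hclu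
    _ ≤ 2 * 2 ^ (M - 1) * Real.exp (-((lt : ℝ) - 2 * (ℓ : ℝ)) / ξ) := by
        apply mul_le_mul (mul_le_mul (hδnorm q) hQnorm (norm_nonneg _) (by norm_num)) hexp
          (Real.exp_pos _).le (by positivity)
    _ = 2 ^ M * Real.exp (-((lt : ℝ) - 2 * (ℓ : ℝ)) / ξ) := by
        congr 1
        rw [← pow_succ']
        congr 1
        omega

end ETH
end
end
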